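/- Let U = B(0,1) be the open unit ball in ℝ³ and fix y ∈ U with y ≠ 0. Define, for x ∈ Ū ∖ {y}, N(x) = (1/(4π)) ( 1/|x−y| + |y| / | x|y|² − y | − log| 1 − ⟨x,y⟩ + | x|y|² − y | / |y| | ). Then: (a) N is harmonic on U ∖ {y}; and (b) for every x with |x| = 1, the radial derivative satisfies ⟨∇N(x), x⟩ = −1/(4π). -/

import Mathlib

open MeasureTheory Metric Filter Bornology
open scoped Topology RealInnerProductSpace NNReal

noncomputable section

abbrev Eucl (n : ℕ) := EuclideanSpace ℝ (Fin n)

/-- `ω_{n-1} = 2 π^{n/2} / Γ(n/2)`, the surface area of the unit sphere in `ℝⁿ`. -/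
def sphereArea (n : ℕ) : ℝ := 2 * Real.pi ^ ((n : ℝ) / 2) / Real.Gamma ((n : ℝ) / 2)

/-- `λₙ = ((n-2) ω_{n-1})⁻¹`. -/
def lam (n : ℕ) : ℝ := (((n : ℝ) - 2) * sphereArea n)⁻¹

/-- The Laplacian of `f : ℝⁿ → ℝ`. -/
def laplacian {n : ℕ} (f : Eucl n → ℝ) (x : Eucl n) : ℝ :=
  ∑ i, fderiv ℝ (fun y => fderiv ℝ f y (EuclideanSpace.single i 1)) x (EuclideanSpace.single i 1)

/-- `f` is harmonic on `s`: twice continuously differentiable there with vanishing Laplacian. -/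
def IsHarmonicOn {n : ℕ} (f : Eucl n → ℝ) (s : Set (Eucl n)) : Prop :=
  ContDiffOn ℝ 2 f s ∧ ∀ x ∈ s, laplacian f x = 0

/-- Dirichlet integral `I(f, E) = ∫_E |∇f|² dx`. -/
def dirichletI {n : ℕ} (f : Eucl n → ℝ) (E : Set (Eucl n)) : ℝ :=
  ∫ x in E, ‖gradient f x‖ ^ 2

/-- `u` is a Dirichlet potential for `(Ω; w; δ)` with constants `a`: `u` is harmonic on
`Ω ∖ {w k}`, continuous on `Ω̄ ∖ {w k}`, vanishes on `∂Ω`, and near each `w k` one has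
`u(x) = δ_k λₙ |x - w_k|^{2-n} + a_k + o(1)`. -/
def IsDirichletPotential {n : ℕ} (Ω : Set (Eucl n)) {ι : Type} (w : ι → Eucl n)
    (δ : ι → ℝ) (u : Eucl n → ℝ) (a : ι → ℝ) : Prop :=
  IsHarmonicOn u (Ω \ Set.range w) ∧ ContinuousOn u (closure Ω \ Set.range w) ∧
  (∀ x ∈ frontier Ω, u x = 0) ∧
  ∀ k, Tendsto (fun x => u x - δ k * lam n * ‖x - w k‖ ^ ((2:ℝ) - (n:ℝ)))
    (𝓝[≠] (w k)) (𝓝 (a k))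

/-- `u` is a Neumann potential for the ball `B(c,R)` with data `(w; δ)` and constants `a`:
`u` is harmonic on `B(c,R) ∖ {w k}`, continuously differentiable on the closed ball minus
`{w k}`, has vanishing radial derivative on the boundary sphere, and near each `w k` one has
`u(x) = δ_k λₙ |x - w_k|^{2-n} + a_k + o(1)`. -/
def IsNeumannPotential {n : ℕ} (c : Eucl n) (R : ℝ) {ι : Type} (w : ι → Eucl n)
    (δ : ι → ℝ) (u : Eucl n → ℝ) (a : ι → ℝ) : Prop :=
  IsHarmonicOn u (ball c R \ Set.range w) ∧
  ContDiffOn ℝ 1 u (closedBall c R \ Set.range w) ∧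
  (∀ x : Eucl n, dist x c = R → ⟪gradient u x, x - c⟫ = 0) ∧
  ∀ k, Tendsto (fun x => u x - δ k * lam n * ‖x - w k‖ ^ ((2:ℝ) - (n:ℝ)))
    (𝓝[≠] (w k)) (𝓝 (a k))

/-- `g` is the Green's function of `Ω` with pole `x₀` and harmonic radius `r`:
`g` is harmonic on `Ω ∖ {x₀}`, continuous on `Ω̄ ∖ {x₀}`, vanishes on `∂Ω` (and at infinity
if `Ω` is unbounded), and `g(x) = λₙ (|x - x₀|^{2-n} - r^{2-n}) + o(1)` as `x → x₀`. -/
def IsGreensFunction {n : ℕ} (Ω : Set (Eucl n)) (x₀ : Eucl n) (g : Eucl n → ℝ) (r : ℝ) : Prop :=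
  0 < r ∧ IsHarmonicOn g (Ω \ {x₀}) ∧ ContinuousOn g (closure Ω \ {x₀}) ∧
  (∀ x ∈ frontier Ω, g x = 0) ∧
  (¬ IsBounded Ω → Tendsto g (cobounded (Eucl n)) (𝓝 0)) ∧
  Tendsto (fun x => g x - lam n * ‖x - x₀‖ ^ ((2:ℝ) - (n:ℝ))) (𝓝[≠] x₀)
    (𝓝 (-(lam n) * r ^ ((2:ℝ) - (n:ℝ))))

/-!
With `y* = (‖y‖ ^ 2)⁻¹ • y` the reflection of `y` in the unit sphere and
`P z = ‖y‖ ‖z - y*‖ - ⟪y, z - y*⟫`, the function is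
`N = (4π)⁻¹ (‖z - y‖⁻¹ + ‖y‖⁻¹ ‖z - y*‖⁻¹ - log P)`. The first two terms are Newtonian potentials,
harmonic off their poles because `Δ ‖z‖ ^ p = p (p + n - 2) ‖z‖ ^ (p - 2)`. With `r = ‖z - y*‖`
one finds `Δ P = (n - 1) ‖y‖ / r` and `‖∇P‖² = 2 ‖y‖ P / r`, so
`Δ log P = Δ P / P - ‖∇P‖² / P²` vanishes exactly when `n = 3`. On the unit sphere
`‖x - y*‖ = ‖x - y‖ / ‖y‖` and `⟪x, y⟫ = (1 + ‖y‖² - ‖x - y‖²) / 2`, which turn the radial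
derivative into a rational function of `‖x - y‖` and `‖y‖` that is identically `-1 / (4π)`.
-/

open InnerProductSpace Module Real
open scoped Laplacian

theorem Real.rpow_eq_sq_rpow_half {r : ℝ} (hr : 0 ≤ r) (s : ℝ) : r ^ s = (r ^ 2) ^ (s / 2) := by
  rw [← Real.rpow_natCast, ← Real.rpow_mul hr]
  ring_nf

section Kernel

variable {E : Type*} [NormedAddCommGroup E] [InnerProductSpace ℝ E]

/-- `‖b‖ r (1 - cos θ)` in spherical coordinates `(r, θ)` about `a` with axis `b`: its level sets
are the paraboloids of revolution with focus `a` and axis `b`. -/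
def parabolicCoord (a b z : E) : ℝ := ‖b‖ * ‖z - a‖ - ⟪b, z - a⟫

@[simp]
theorem parabolicCoord_self (a b : E) : parabolicCoord a b a = 0 := by
  simp [parabolicCoord]

theorem ne_of_parabolicCoord_pos {a b x : E} (hx : 0 < parabolicCoord a b x) : x ≠ a := by
  rintro rfl
  simp at hx

theorem contDiffAt_parabolicCoord {a x : E} (b : E) (hx : x ≠ a) {n : WithTop ℕ∞} :
    ContDiffAt ℝ n (parabolicCoord a b) x :=
  (contDiffAt_const.mul ((contDiffAt_id.sub contDiffAt_const).norm ℝ (sub_ne_zero.2 hx))).sub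
    (contDiffAt_const.inner ℝ (contDiffAt_id.sub contDiffAt_const))

theorem parabolicCoord_inv_smul_self {y : E} (hy : y ≠ 0) (z : E) :
    parabolicCoord ((‖y‖ ^ 2)⁻¹ • y) y z = ‖y‖ * ‖z - (‖y‖ ^ 2)⁻¹ • y‖ + 1 - ⟪z, y⟫ := by
  have hy' : ‖y‖ ≠ 0 := norm_ne_zero_iff.2 hy
  simp only [parabolicCoord, inner_sub_right, real_inner_smul_right, real_inner_self_eq_norm_sq,
    real_inner_comm y z]
  field_simp
  ring

theorem parabolicCoord_inv_smul_self_pos {y z : E} (hy : y ≠ 0) (hz : ⟪z, y⟫ < 1) :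
    0 < parabolicCoord ((‖y‖ ^ 2)⁻¹ • y) y z := by
  rw [parabolicCoord_inv_smul_self hy]
  linarith [mul_nonneg (norm_nonneg y) (norm_nonneg (z - (‖y‖ ^ 2)⁻¹ • y))]

theorem norm_sub_inv_smul_self_of_norm_eq_one {x y : E} (hy : y ≠ 0) (hx : ‖x‖ = 1) :
    ‖x - (‖y‖ ^ 2)⁻¹ • y‖ = ‖x - y‖ / ‖y‖ := by
  have hm : ‖y‖ ≠ 0 := norm_ne_zero_iff.2 hy
  rw [eq_div_iff hm, ← sq_eq_sq₀ (by positivity) (by positivity), mul_pow, norm_sub_sq_real,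
    norm_sub_sq_real, hx, real_inner_smul_right, norm_smul]
  simp only [norm_inv, norm_pow, norm_norm]
  field_simp
  ring

def neumannKernel (y z : E) : ℝ :=
  1 / (4 * π) * (‖z - y‖⁻¹ + ‖y‖⁻¹ * ‖z - (‖y‖ ^ 2)⁻¹ • y‖⁻¹
    - Real.log (parabolicCoord ((‖y‖ ^ 2)⁻¹ • y) y z))

theorem neumannKernel_eq {y : E} (hy : y ≠ 0) (z : E) :
    1 / (4 * π) * (1 / ‖z - y‖ + ‖y‖ / ‖(‖y‖ ^ 2 : ℝ) • z - y‖
      - Real.log |1 - ⟪z, y⟫ + ‖(‖y‖ ^ 2 : ℝ) • z - y‖ / ‖y‖|) = neumannKernel y z := by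
  have hy' : ‖y‖ ≠ 0 := norm_ne_zero_iff.2 hy
  have hscale : ‖(‖y‖ ^ 2 : ℝ) • z - y‖ = ‖y‖ ^ 2 * ‖z - (‖y‖ ^ 2)⁻¹ • y‖ := by
    rw [← norm_smul_of_nonneg (by positivity), smul_sub, smul_inv_smul₀ (by positivity)]
  rw [neumannKernel, parabolicCoord_inv_smul_self hy, Real.log_abs, hscale]
  field_simp
  ring_nf

end Kernel

section Gradient

variable {E : Type*} [NormedAddCommGroup E] [InnerProductSpace ℝ E] [CompleteSpace E]

theorem hasGradientAt_iff_hasFDerivAt_innerSL {f : E → ℝ} {G x : E} :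
    HasGradientAt f G x ↔ HasFDerivAt f (innerSL ℝ G) x :=
  hasGradientAt_iff_hasFDerivAt

theorem HasGradientAt.add {f g : E → ℝ} {F G x : E} (hf : HasGradientAt f F x)
    (hg : HasGradientAt g G x) : HasGradientAt (fun z => f z + g z) (F + G) x := by
  rw [hasGradientAt_iff_hasFDerivAt_innerSL, map_add] at *
  exact hf.add hg

theorem HasGradientAt.sub {f g : E → ℝ} {F G x : E} (hf : HasGradientAt f F x)
    (hg : HasGradientAt g G x) : HasGradientAt (fun z => f z - g z) (F - G) x := by
  rw [hasGradientAt_iff_hasFDerivAt_innerSL] at *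
  rw [map_sub]
  exact hf.sub hg

theorem HasGradientAt.const_mul {f : E → ℝ} {F x : E} (hf : HasGradientAt f F x) (c : ℝ) :
    HasGradientAt (fun z => c * f z) (c • F) x := by
  rw [hasGradientAt_iff_hasFDerivAt_innerSL] at *
  simpa using hf.const_mul c

theorem HasGradientAt.log {f : E → ℝ} {F x : E} (hf : HasGradientAt f F x) (hx : f x ≠ 0) :
    HasGradientAt (fun z => Real.log (f z)) ((f x)⁻¹ • F) x := by
  rw [hasGradientAt_iff_hasFDerivAt_innerSL] at *
  simpa using hf.log hx

theorem hasGradientAt_normSq_sub (a x : E) :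
    HasGradientAt (fun z => ‖z - a‖ ^ 2) ((2 : ℝ) • (x - a)) x := by
  rw [hasGradientAt_iff_hasFDerivAt_innerSL]
  refine ((hasFDerivAt_id x).sub_const a).norm_sq.congr_fderiv ?_
  ext v
  simp [two_smul]

theorem hasGradientAt_norm_sub_rpow {a x : E} (hx : x ≠ a) (p : ℝ) :
    HasGradientAt (fun z => ‖z - a‖ ^ p) ((p * ‖x - a‖ ^ (p - 2)) • (x - a)) x := by
  simp_rw [Real.rpow_eq_sq_rpow_half (norm_nonneg _) p,
    Real.rpow_eq_sq_rpow_half (norm_nonneg (x - a)) (p - 2), hasGradientAt_iff_hasFDerivAt_innerSL]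
  refine (((hasFDerivAt_id x).sub_const a).norm_sq.rpow_const
    (Or.inl (by simpa [sub_eq_zero] using hx))).congr_fderiv ?_
  ext v
  simp [innerSL_apply_apply]
  ring_nf

theorem hasGradientAt_inv_norm_sub {a x : E} (hx : x ≠ a) :
    HasGradientAt (fun z => ‖z - a‖⁻¹) (-(‖x - a‖ ^ 3)⁻¹ • (x - a)) x := by
  have h := hasGradientAt_norm_sub_rpow hx (-1)
  rw [show (-1 : ℝ) - 2 = -3 by norm_num] at h
  simpa [Real.rpow_neg_one, Real.rpow_neg (norm_nonneg _)] using h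

theorem hasGradientAt_inner_sub (a b x : E) : HasGradientAt (fun z => ⟪b, z - a⟫) b x :=
  hasGradientAt_iff_hasFDerivAt_innerSL.2
    ((innerSL ℝ b).hasFDerivAt.comp x ((hasFDerivAt_id x).sub_const a))

theorem hasGradientAt_parabolicCoord {a x : E} (b : E) (hx : x ≠ a) :
    HasGradientAt (parabolicCoord a b) ((‖b‖ * ‖x - a‖⁻¹) • (x - a) - b) x := by
  have h := hasGradientAt_iff_hasFDerivAt_innerSL.1 (hasGradientAt_norm_sub_rpow hx 1)
  rw [show (1 : ℝ) - 2 = -1 by norm_num, Real.rpow_neg_one, one_mul] at h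
  simp only [Real.rpow_one] at h
  rw [hasGradientAt_iff_hasFDerivAt_innerSL]
  refine ((h.const_mul ‖b‖).sub
    (hasGradientAt_iff_hasFDerivAt_innerSL.1 (hasGradientAt_inner_sub a b x))).congr_fderiv ?_
  ext v
  simp [innerSL_apply_apply]
  ring

theorem norm_gradient_parabolicCoord_sq {a x : E} (b : E) (hx : x ≠ a) :
    ‖gradient (parabolicCoord a b) x‖ ^ 2 = 2 * ‖b‖ * parabolicCoord a b x / ‖x - a‖ := by
  have hn : ‖x - a‖ ≠ 0 := norm_ne_zero_iff.2 (sub_ne_zero.2 hx)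
  rw [(hasGradientAt_parabolicCoord b hx).gradient, norm_sub_sq_real, norm_smul,
    real_inner_smul_left, parabolicCoord, real_inner_comm]
  simp only [norm_mul, norm_inv, norm_norm]
  field_simp
  ring

theorem inner_gradient_neumannKernel_of_norm_eq_one {x y : E} (hy0 : y ≠ 0) (hy : ‖y‖ < 1)
    (hx : ‖x‖ = 1) : ⟪gradient (neumannKernel y) x, x⟫ = -(1 / (4 * π)) := by
  set y' := (‖y‖ ^ 2)⁻¹ • y with hy'
  have hxy : x ≠ y := by
    rintro rfl
    exact hy.ne hx
  have hP : 0 < parabolicCoord y' y x := parabolicCoord_inv_smul_self_pos hy0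
    ((real_inner_le_norm x y).trans_lt (by rwa [hx, one_mul]))
  have hxy' : x ≠ y' := ne_of_parabolicCoord_pos hP
  have hG := ((((hasGradientAt_inv_norm_sub hxy).add
    ((hasGradientAt_inv_norm_sub hxy').const_mul ‖y‖⁻¹)).sub
    ((hasGradientAt_parabolicCoord y hxy').log hP.ne')).const_mul (1 / (4 * π)))
  rw [HasGradientAt.gradient (f := neumannKernel y) hG, parabolicCoord_inv_smul_self hy0, ← hy']
  have hm : ‖y‖ ≠ 0 := norm_ne_zero_iff.2 hy0
  have hρ : ‖x - y‖ ≠ 0 := norm_ne_zero_iff.2 (sub_ne_zero.2 hxy)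
  have hkelvin : ‖x - y'‖ = ‖x - y‖ / ‖y‖ := norm_sub_inv_smul_self_of_norm_eq_one hy0 hx
  have hinner : ⟪x, y⟫ = (1 + ‖y‖ ^ 2 - ‖x - y‖ ^ 2) / 2 := by
    rw [norm_sub_sq_real, hx]
    ring
  have hy'x : ⟪y', x⟫ = ⟪x, y⟫ / ‖y‖ ^ 2 := by
    rw [hy', real_inner_smul_left, real_inner_comm, inv_mul_eq_div]
  rw [parabolicCoord_inv_smul_self hy0, ← hy', hkelvin, hinner] at hP
  simp only [real_inner_smul_left, inner_add_left, inner_sub_left, real_inner_self_eq_norm_sq, hx,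
    real_inner_comm x y, hy'x, hkelvin, hinner]
  generalize ‖x - y‖ = ρ at *
  generalize ‖y‖ = m at *
  have hP' : m * (ρ / m) + 1 - (1 + m ^ 2 - ρ ^ 2) / 2 = ((ρ + 1) ^ 2 - m ^ 2) / 2 := by
    field_simp
    ring
  rw [hP'] at hP ⊢
  have : (ρ + 1) ^ 2 - m ^ 2 ≠ 0 := by linarith
  field_simp
  ring

end Gradient

section Laplacian

variable {E : Type*} [NormedAddCommGroup E] [InnerProductSpace ℝ E] [FiniteDimensional ℝ E]

theorem laplacian_eq_sum_of_hasFDerivAt {ι : Type*} [Fintype ι] (v : OrthonormalBasis ι ℝ E)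
    {f : E → ℝ} {f' : E → E →L[ℝ] ℝ} {f'' : E →L[ℝ] E →L[ℝ] ℝ} {x : E}
    (hf : ∀ᶠ z in 𝓝 x, HasFDerivAt f (f' z) z) (hf' : HasFDerivAt f' f'' x) :
    Δ f x = ∑ i, f'' (v i) (v i) := by
  have hfderiv : fderiv ℝ f =ᶠ[𝓝 x] f' := hf.mono fun z hz => hz.fderiv
  rw [laplacian_eq_iteratedFDeriv_orthonormalBasis f v]
  simp only [iteratedFDeriv_two_apply, (hf'.congr_of_eventuallyEq hfderiv).fderiv]
  rfl

theorem ContDiffAt.laplacian_eq_sum {f : E → ℝ} {x : E} (hf : ContDiffAt ℝ 2 f x)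
    {ι : Type*} [Fintype ι] (v : OrthonormalBasis ι ℝ E) :
    Δ f x = ∑ i, fderiv ℝ (fderiv ℝ f) x (v i) (v i) :=
  laplacian_eq_sum_of_hasFDerivAt v
    ((hf.eventually (by simp)).mono fun z hz => (hz.differentiableAt (by simp)).hasFDerivAt)
    ((hf.fderiv_right (m := 1) le_rfl).differentiableAt one_ne_zero).hasFDerivAt

theorem ContDiffAt.laplacian_comp {g : E → ℝ} {x : E} (hg : ContDiffAt ℝ 2 g x)
    {φ φ' : ℝ → ℝ} {φ'' : ℝ} (hφ : ∀ᶠ t in 𝓝 (g x), HasDerivAt φ (φ' t) t)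
    (hφ' : HasDerivAt φ' φ'' (g x)) :
    Δ (fun z => φ (g z)) x = φ'' * ‖gradient g x‖ ^ 2 + φ' (g x) * Δ g x := by
  let v := stdOrthonormalBasis ℝ E
  have hg₁ : ∀ᶠ z in 𝓝 x, HasFDerivAt g (fderiv ℝ g z) z :=
    (hg.eventually (by simp)).mono fun z hz => (hz.differentiableAt (by simp)).hasFDerivAt
  have hg₂ : HasFDerivAt (fderiv ℝ g) (fderiv ℝ (fderiv ℝ g) x) x :=
    ((hg.fderiv_right (m := 1) le_rfl).differentiableAt one_ne_zero).hasFDerivAt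
  have hcomp : ∀ᶠ z in 𝓝 x, HasFDerivAt (fun z => φ (g z)) (φ' (g z) • fderiv ℝ g z) z := by
    filter_upwards [hg₁, hg.continuousAt.eventually hφ] with z hgz hφz
    exact hφz.comp_hasFDerivAt z hgz
  rw [laplacian_eq_sum_of_hasFDerivAt v hcomp
      ((hφ'.comp_hasFDerivAt x hg₁.self_of_nhds).smul hg₂),
    hg.laplacian_eq_sum v, Finset.mul_sum, ← OrthonormalBasis.sum_sq_inner_left v, Finset.mul_sum,
    ← Finset.sum_add_distrib]
  refine Finset.sum_congr rfl fun i _ => ?_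
  simp only [add_apply, smul_apply,
    ContinuousLinearMap.smulRight_apply, smul_eq_mul, Function.comp_apply,
    (hg.differentiableAt (by simp)).hasGradientAt.fderiv_apply]
  ring

theorem laplacian_normSq_sub (a x : E) : Δ (fun z => ‖z - a‖ ^ 2) x = 2 * finrank ℝ E := by
  have hf' : HasFDerivAt (fun z => (2 : ℝ) • innerSL ℝ (z - a)) ((2 : ℝ) • innerSL ℝ) x :=
    ((innerSL ℝ).hasFDerivAt.comp x ((hasFDerivAt_id x).sub_const a)).const_smul (2 : ℝ)
  rw [laplacian_eq_sum_of_hasFDerivAt (stdOrthonormalBasis ℝ E)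
    (Eventually.of_forall fun z => hasGradientAt_iff_hasFDerivAt_innerSL.1
      (hasGradientAt_normSq_sub a z)) (by simpa using hf')]
  change ∑ i, (2 : ℝ) * ⟪stdOrthonormalBasis ℝ E i, stdOrthonormalBasis ℝ E i⟫ = _
  simp [mul_comm]

theorem laplacian_rpow_normSq_sub {a x : E} (hx : x ≠ a) (q : ℝ) :
    Δ (fun z => (‖z - a‖ ^ 2) ^ q) x =
      2 * q * (2 * q + finrank ℝ E - 2) * (‖x - a‖ ^ 2) ^ (q - 1) := by
  have hn : ‖x - a‖ ≠ 0 := norm_ne_zero_iff.2 (sub_ne_zero.2 hx)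
  have ht : 0 < ‖x - a‖ ^ 2 := by positivity
  have hg : ContDiffAt ℝ 2 (fun z => ‖z - a‖ ^ 2) x :=
    ((contDiff_id.sub contDiff_const).norm_sq ℝ).contDiffAt
  rw [hg.laplacian_comp (φ := fun t => t ^ q) (φ' := fun t => q * t ^ (q - 1))
      ((lt_mem_nhds ht).mono fun t ht => Real.hasDerivAt_rpow_const (Or.inl ht.ne'))
      ((Real.hasDerivAt_rpow_const (Or.inl ht.ne')).const_mul q),
    (hasGradientAt_normSq_sub a x).gradient, laplacian_normSq_sub, norm_smul, Real.norm_two,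
    mul_pow, Real.rpow_sub_one ht.ne' (q - 1)]
  field_simp
  ring

theorem laplacian_norm_sub_rpow {a x : E} (hx : x ≠ a) (p : ℝ) :
    Δ (fun z => ‖z - a‖ ^ p) x = p * (p + finrank ℝ E - 2) * ‖x - a‖ ^ (p - 2) := by
  simp_rw [Real.rpow_eq_sq_rpow_half (norm_nonneg _)]
  rw [laplacian_rpow_normSq_sub hx]
  ring_nf

theorem laplacian_parabolicCoord {a x : E} (b : E) (hx : x ≠ a) :
    Δ (parabolicCoord a b) x = ‖b‖ * (finrank ℝ E - 1) / ‖x - a‖ := by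
  have hnorm : Δ (fun z => ‖z - a‖) x = (finrank ℝ E - 1) / ‖x - a‖ := by
    have h := laplacian_norm_sub_rpow hx 1
    simp only [Real.rpow_one, show (1 : ℝ) - 2 = -1 by norm_num, Real.rpow_neg_one] at h
    rw [h]
    ring
  have hinner : Δ (fun z => ⟪b, z - a⟫) x = 0 := by
    rw [laplacian_eq_sum_of_hasFDerivAt (stdOrthonormalBasis ℝ E)
      (Eventually.of_forall fun z => hasGradientAt_iff_hasFDerivAt_innerSL.1
        (hasGradientAt_inner_sub a b z)) (hasFDerivAt_const _ x)]
    simp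
  have hnormC : ContDiffAt ℝ 2 (fun z => ‖z - a‖) x :=
    (contDiffAt_id.sub contDiffAt_const).norm ℝ (sub_ne_zero.2 hx)
  have hinnerC : ContDiffAt ℝ 2 (fun z => ⟪b, z - a⟫) x :=
    contDiffAt_const.inner ℝ (contDiffAt_id.sub contDiffAt_const)
  change Δ ((‖b‖ • fun z => ‖z - a‖) - fun z => ⟪b, z - a⟫) x = _
  rw [ContDiffAt.laplacian_sub (f₁ := ‖b‖ • fun z => ‖z - a‖) (hnormC.const_smul ‖b‖) hinnerC,
    laplacian_smul _ hnormC, hnorm, hinner]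
  simp [mul_div_assoc]

theorem laplacian_log_parabolicCoord {a b x : E} (hx : 0 < parabolicCoord a b x) :
    Δ (fun z => Real.log (parabolicCoord a b z)) x =
      (finrank ℝ E - 3) * ‖b‖ / (‖x - a‖ * parabolicCoord a b x) := by
  have hxa : x ≠ a := ne_of_parabolicCoord_pos hx
  have hn : ‖x - a‖ ≠ 0 := norm_ne_zero_iff.2 (sub_ne_zero.2 hxa)
  rw [(contDiffAt_parabolicCoord b hxa).laplacian_comp (φ' := fun t => t⁻¹)
      ((lt_mem_nhds hx).mono fun t ht => Real.hasDerivAt_log ht.ne') (hasDerivAt_inv hx.ne'),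
    norm_gradient_parabolicCoord_sq b hxa,
    laplacian_parabolicCoord b hxa]
  field_simp
  ring

theorem harmonicAt_norm_sub_rpow_two_sub_finrank {a x : E} (hx : x ≠ a) :
    HarmonicAt (fun z => ‖z - a‖ ^ (2 - finrank ℝ E : ℝ)) x := by
  refine ⟨((contDiffAt_id.sub contDiffAt_const).norm ℝ (sub_ne_zero.2 hx)).rpow_const_of_ne
    (norm_ne_zero_iff.2 (sub_ne_zero.2 hx)), ?_⟩
  filter_upwards [eventually_ne_nhds hx] with z hz
  simp [laplacian_norm_sub_rpow hz]

theorem harmonicAt_log_parabolicCoord (hE : finrank ℝ E = 3) {a b x : E}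
    (hx : 0 < parabolicCoord a b x) : HarmonicAt (fun z => Real.log (parabolicCoord a b z)) x := by
  have hC : ContDiffAt ℝ 2 (parabolicCoord a b) x :=
    contDiffAt_parabolicCoord b (ne_of_parabolicCoord_pos hx)
  refine ⟨hC.log hx.ne', ?_⟩
  filter_upwards [hC.continuousAt.eventually (lt_mem_nhds hx)] with z hz
  simp [laplacian_log_parabolicCoord hz, hE]

theorem harmonicAt_inv_norm_sub (hE : finrank ℝ E = 3) {a x : E} (hx : x ≠ a) :
    HarmonicAt (fun z => ‖z - a‖⁻¹) x := by
  have h := harmonicAt_norm_sub_rpow_two_sub_finrank (E := E) hx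
  norm_num [hE, Real.rpow_neg_one] at h
  exact h

theorem harmonicAt_neumannKernel (hE : finrank ℝ E = 3) {y z : E} (hy : y ≠ 0) (hzy : z ≠ y)
    (hz : ⟪z, y⟫ < 1) : HarmonicAt (neumannKernel y) z := by
  have hP := parabolicCoord_inv_smul_self_pos hy hz
  exact (((harmonicAt_inv_norm_sub hE hzy).add ((harmonicAt_inv_norm_sub hE
    (ne_of_parabolicCoord_pos hP)).const_smul (c := ‖y‖⁻¹))).sub
    (harmonicAt_log_parabolicCoord hE hP)).const_smul (c := 1 / (4 * π))

end Laplacian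

theorem ContDiffAt.laplacian_eq {n : ℕ} {f : Eucl n → ℝ} {x : Eucl n} (hf : ContDiffAt ℝ 2 f x) :
    laplacian f x = Δ f x := by
  rw [hf.laplacian_eq_sum (EuclideanSpace.basisFun (Fin n) ℝ), laplacian]
  refine Finset.sum_congr rfl fun i _ => ?_
  rw [EuclideanSpace.basisFun_apply, fderiv_clm_apply]
  · simp
  · exact ((hf.fderiv_right (m := 1) le_rfl).differentiableAt one_ne_zero)
  · exact differentiableAt_const _

theorem InnerProductSpace.HarmonicOnNhd.isHarmonicOn {n : ℕ} {f : Eucl n → ℝ} {s : Set (Eucl n)}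
    (hf : HarmonicOnNhd f s) : IsHarmonicOn f s :=
  ⟨hf.contDiffOn, fun x hx => ContDiffAt.laplacian_eq (hf x hx).1 |>.trans (hf x hx).2.self_of_nhds⟩

/-- the Neumann function of the unit ball in `ℝ³` (Sadybekov et al.). -/
theorem neumann_function_unit_ball_R3 (y : Eucl 3) (hy : y ∈ ball (0 : Eucl 3) 1)
    (hy0 : y ≠ 0) (N : Eucl 3 → ℝ)
    (hN : ∀ x : Eucl 3, N x = (1 / (4 * Real.pi)) *
      (1 / ‖x - y‖ + ‖y‖ / ‖(‖y‖ ^ 2 : ℝ) • x - y‖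
        - Real.log |1 - ⟪x, y⟫ + ‖(‖y‖ ^ 2 : ℝ) • x - y‖ / ‖y‖|)) :
    IsHarmonicOn N (ball (0 : Eucl 3) 1 \ {y}) ∧
      ∀ x : Eucl 3, ‖x‖ = 1 → ⟪gradient N x, x⟫ = -(1 / (4 * Real.pi)) := by
  have hy1 : ‖y‖ < 1 := mem_ball_zero_iff.1 hy
  obtain rfl : N = neumannKernel y := funext fun z => (hN z).trans (neumannKernel_eq hy0 z)
  refine ⟨HarmonicOnNhd.isHarmonicOn fun z hz => ?_,
    fun x hx => inner_gradient_neumannKernel_of_norm_eq_one hy0 hy1 hx⟩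
  have hzy : ⟪z, y⟫ < 1 := (real_inner_le_norm z y).trans_lt
    (mul_lt_one_of_nonneg_of_lt_one_left (norm_nonneg z) (mem_ball_zero_iff.1 hz.1) hy1.le)
  exact harmonicAt_neumannKernel finrank_euclideanSpace_fin hy0 hz.2 hzy
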